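/- arXiv:2003.13232 — 4 statements merged into one kernel-verified Lean document; each statement's English description precedes it below -/
import Mathlib

section
/- If the tail F̄ of a nonnegative random variable X is O-regularly varying with lower exponent α > 1 (i.e., F̄(t)/F̄(a) ≤ C₀(t/a)^{−α} for all t ≥ a ≥ x₀), then the SERPT rank function r(a) = ∫ₐ^∞ F̄(t) dt / F̄(a) satisfies r(a) = O(a) as a → ∞; if additionally F̄(t)/F̄(a) ≥ (1/C₀)(t/a)^{−β} for some β > 1, then r(a) = Ω(a), hence r(a) = Θ(a). -/
open MeasureTheory

private lemma aux_eq {a p : ℝ} (ha : 0 < a) {t : ℝ} (ht : t ∈ Set.Ioi a) :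
    (t / a) ^ p = (a ^ p)⁻¹ * t ^ p := by
  have ht0 : (0:ℝ) ≤ t := le_of_lt (lt_trans ha ht)
  rw [Real.div_rpow ht0 ha.le, div_eq_inv_mul]

private lemma aux_integrable {a p : ℝ} (ha : 0 < a) (hp : p < -1) :
    IntegrableOn (fun t => (t / a) ^ p) (Set.Ioi a) := by
  have h : IntegrableOn (fun t => (a ^ p)⁻¹ * t ^ p) (Set.Ioi a) :=
    (integrableOn_Ioi_rpow_of_lt hp ha).const_mul (a ^ p)⁻¹
  exact h.congr_fun (fun t ht => (aux_eq ha ht).symm) measurableSet_Ioi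

private lemma aux_integral {a p : ℝ} (ha : 0 < a) (hp : p < -1) :
    ∫ t in Set.Ioi a, (t / a) ^ p = a / (-p - 1) := by
  rw [setIntegral_congr_fun measurableSet_Ioi (fun t ht => aux_eq ha ht),
    integral_const_mul, integral_Ioi_rpow_of_lt hp ha]
  have h1 : a ^ p ≠ 0 := (Real.rpow_pos_of_pos ha p).ne'
  have h2 : p + 1 ≠ 0 := by linarith
  have h3 : -p - 1 ≠ 0 := by linarith
  rw [Real.rpow_add ha, Real.rpow_one, mul_comm, div_mul_eq_mul_div,
    div_eq_div_iff h2 h3]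
  field_simp
  ring

/-- If the tail `F̄` is O-regularly varying with lower exponent `α > 1`, then the
SERPT rank `r(a) = (∫ₐ^∞ F̄(t) dt)/F̄(a)` is `O(a)` as `a → ∞`; if additionally
the matching lower bound holds with some `β > 1`, then `r(a) = Ω(a)`,
hence `r(a) = Θ(a)`. -/
theorem serpt_rank_linear (Fbar : ℝ → ℝ) (hcont : Continuous Fbar)
    (hpos : ∀ x, 0 < Fbar x) (hint : IntegrableOn Fbar (Set.Ioi 0))
    (α C₀ x₀ : ℝ) (hα : 1 < α) (hC₀ : 0 < C₀) (hx₀ : 0 < x₀)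
    (hup : ∀ x y, x₀ ≤ x → x ≤ y → Fbar y / Fbar x ≤ C₀ * (y / x) ^ (-α)) :
    (∃ C a₀ : ℝ, 0 < C ∧ 0 < a₀ ∧ ∀ a, a₀ ≤ a →
        (∫ t in Set.Ioi a, Fbar t) / Fbar a ≤ C * a) ∧
    (∀ β : ℝ, 1 < β →
      (∀ x y, x₀ ≤ x → x ≤ y → (1 / C₀) * (y / x) ^ (-β) ≤ Fbar y / Fbar x) →
      ∃ c a₀ : ℝ, 0 < c ∧ 0 < a₀ ∧ ∀ a, a₀ ≤ a →
        c * a ≤ (∫ t in Set.Ioi a, Fbar t) / Fbar a) := by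
  constructor
  · refine ⟨C₀ / (α - 1), x₀, div_pos hC₀ (by linarith), hx₀, fun a ha => ?_⟩
    have ha0 : 0 < a := lt_of_lt_of_le hx₀ ha
    have hαp : -α < -1 := by linarith
    have hFint : IntegrableOn Fbar (Set.Ioi a) :=
      hint.mono (Set.Ioi_subset_Ioi ha0.le) le_rfl
    have hmono : ∫ t in Set.Ioi a, Fbar t ≤
        ∫ t in Set.Ioi a, C₀ * Fbar a * (t / a) ^ (-α) := by
      refine setIntegral_mono_on hFint (((aux_integrable ha0 hαp).const_mul _))
        measurableSet_Ioi (fun t ht => ?_)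
      have h := hup a t ha (le_of_lt ht)
      have := (div_le_iff₀ (hpos a)).mp h
      calc Fbar t ≤ C₀ * (t / a) ^ (-α) * Fbar a := this
        _ = C₀ * Fbar a * (t / a) ^ (-α) := by ring
    rw [integral_const_mul, aux_integral ha0 hαp] at hmono
    rw [div_le_iff₀ (hpos a)]
    calc (∫ t in Set.Ioi a, Fbar t) ≤ C₀ * Fbar a * (a / (α - 1)) := by
          convert hmono using 3; ring
      _ = C₀ / (α - 1) * a * Fbar a := by ring
  · intro β hβ hlow
    have hb1 : (0:ℝ) < β - 1 := by linarith
    refine ⟨1 / (C₀ * (β - 1)), x₀, by positivity, hx₀, fun a ha => ?_⟩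
    have ha0 : 0 < a := lt_of_lt_of_le hx₀ ha
    have hβp : -β < -1 := by linarith
    have hFint : IntegrableOn Fbar (Set.Ioi a) :=
      hint.mono (Set.Ioi_subset_Ioi ha0.le) le_rfl
    have hmono : ∫ t in Set.Ioi a, (1 / C₀) * Fbar a * (t / a) ^ (-β) ≤
        ∫ t in Set.Ioi a, Fbar t := by
      refine setIntegral_mono_on (((aux_integrable ha0 hβp).const_mul _)) hFint
        measurableSet_Ioi (fun t ht => ?_)
      have h := hlow a t ha (le_of_lt ht)
      have := (le_div_iff₀ (hpos a)).mp h
      calc (1 / C₀) * Fbar a * (t / a) ^ (-β)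
          = 1 / C₀ * (t / a) ^ (-β) * Fbar a := by ring
        _ ≤ Fbar t := this
    rw [integral_const_mul, aux_integral ha0 hβp] at hmono
    rw [le_div_iff₀ (hpos a)]
    calc 1 / (C₀ * (β - 1)) * a * Fbar a
        = 1 / C₀ * Fbar a * (a / (-(-β) - 1)) := by
          rw [neg_neg]; field_simp
      _ ≤ ∫ t in Set.Ioi a, Fbar t := hmono
end

section
/- If the tail F̄ is O-regularly varying with exponents in (1,∞) (i.e., there exist β > 1 and C₁, x₁ > 0 such that F̄(t)/F̄(a) ≥ C₁(t/a)^{−β} for all t > a > x₁), then there exist constants C₀, x₀ > 0 such that for all b > a > x₀, the time-per-completion function η(a,b) = (∫ₐᵇ F̄(t) dt)/(F̄(a) − F̄(b)) satisfies η(a,b) ≥ C₀ · a · (1 − a/b). -/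
open MeasureTheory intervalIntegral Set

/-! Enlarging the exponent to `B = max β 2` only weakens the hypothesis, since `t / a ≥ 1`,
so `F̄ t ≥ C₁ F̄(a) (t/a)^(-B)` on `(a, b)`. Integrating gives
`∫ₐᵇ F̄ ≥ C₁ F̄(a) · a/(B-1) · (1 - (a/b)^(B-1)) ≥ C₁ F̄(a) · a/(B-1) · (1 - a/b)`,
where the last step uses `B - 1 ≥ 1`. Finally the denominator `F̄(a) - F̄(b)` is at most `F̄(a)`. -/

lemma integral_div_rpow_neg {a b β : ℝ} (ha : 0 < a) (hab : a ≤ b) (hβ : 1 < β) :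
    ∫ t in a..b, (t / a) ^ (-β) = a / (β - 1) * (1 - (a / b) ^ (β - 1)) := by
  have hb : 0 < b := ha.trans_le hab
  have h_zero_notMem : (0 : ℝ) ∉ uIcc 1 (b / a) := by
    rw [uIcc_of_le ((one_le_div ha).2 hab)]
    exact fun h => absurd h.1 (by norm_num)
  rw [integral_comp_div (fun u => u ^ (-β)) ha.ne', div_self ha.ne',
    integral_rpow (Or.inr ⟨by linarith, h_zero_notMem⟩), Real.one_rpow,
    show -β + 1 = -(β - 1) by ring, Real.rpow_neg (by positivity),
    ← Real.inv_rpow (by positivity), inv_div, smul_eq_mul]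
  field_simp
  ring

lemma le_integral_div_rpow_neg {a b β : ℝ} (ha : 0 < a) (hab : a ≤ b) (hβ : 2 ≤ β) :
    a / (β - 1) * (1 - a / b) ≤ ∫ t in a..b, (t / a) ^ (-β) := by
  have hb : 0 < b := ha.trans_le hab
  have h_pow_le : (a / b) ^ (β - 1) ≤ a / b :=
    Real.rpow_le_self_of_le_one (by positivity) ((div_le_one hb).2 hab) (by linarith)
  rw [integral_div_rpow_neg ha hab (by linarith)]
  have h_coeff_nonneg : 0 ≤ a / (β - 1) := div_nonneg ha.le (by linarith)
  gcongr

lemma intervalIntegrable_div_rpow {a b β : ℝ} (ha : 0 < a) (hab : a ≤ b) :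
    IntervalIntegrable (fun t => (t / a) ^ β) volume a b := by
  refine ContinuousOn.intervalIntegrable (ContinuousOn.rpow_const (by fun_prop) fun t ht => ?_)
  rw [uIcc_of_le hab] at ht
  exact Or.inl (div_pos (ha.trans_le ht.1) ha).ne'

lemma le_integral_div_of_forall_rpow_le_div {F : ℝ → ℝ} {a b β C : ℝ}
    (hF : IntervalIntegrable F volume a b) (ha : 0 < a) (hab : a ≤ b) (hβ : 2 ≤ β)
    (hFa : 0 < F a) (hC : 0 ≤ C)
    (hlow : ∀ t ∈ Ioo a b, C * (t / a) ^ (-β) ≤ F t / F a) :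
    C / (β - 1) * a * (1 - a / b) ≤ (∫ t in a..b, F t) / F a := by
  rw [le_div_iff₀ hFa]
  calc C / (β - 1) * a * (1 - a / b) * F a = C * F a * (a / (β - 1) * (1 - a / b)) := by ring
    _ ≤ C * F a * ∫ t in a..b, (t / a) ^ (-β) := by
        gcongr
        exact le_integral_div_rpow_neg ha hab hβ
    _ = ∫ t in a..b, C * F a * (t / a) ^ (-β) := (intervalIntegral.integral_const_mul _ _).symm
    _ ≤ ∫ t in a..b, F t := by
        refine integral_mono_on_of_le_Ioo hab ((intervalIntegrable_div_rpow ha hab).const_mul _)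
          hF fun t ht => ?_
        have h_mul := (le_div_iff₀ hFa).1 (hlow t ht)
        linarith

/-- If the tail `F̄` satisfies the O-regular variation lower bound
`F̄(t)/F̄(a) ≥ C₁(t/a)^{−β}` for all `t > a > x₁` with `β > 1`, then there exist
`C₀, x₀ > 0` such that the time-per-completion function
`η(a,b) = (∫ₐᵇ F̄)/(F̄(a) − F̄(b))` satisfies `η(a,b) ≥ C₀·a·(1 − a/b)`
for all `b > a > x₀`. -/
theorem eta_lower_bound (Fbar : ℝ → ℝ) (hcont : Continuous Fbar)
    (hpos : ∀ x, 0 < Fbar x) (hanti : StrictAnti Fbar)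
    (β C₁ x₁ : ℝ) (hβ : 1 < β) (hC₁ : 0 < C₁) (hx₁ : 0 < x₁)
    (hlow : ∀ a t, x₁ < a → a < t → C₁ * (t / a) ^ (-β) ≤ Fbar t / Fbar a) :
    ∃ C₀ x₀ : ℝ, 0 < C₀ ∧ 0 < x₀ ∧ ∀ a b, x₀ < a → a < b →
      C₀ * a * (1 - a / b) ≤ (∫ t in a..b, Fbar t) / (Fbar a - Fbar b) := by
  set B := max β 2
  have hB : 1 < B := hβ.trans_le (le_max_left _ _)
  refine ⟨C₁ / (B - 1), x₁, div_pos hC₁ (sub_pos.2 hB), hx₁, fun a b ha hab => ?_⟩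
  have ha0 : 0 < a := hx₁.trans ha
  have hlowB : ∀ t ∈ Ioo a b, C₁ * (t / a) ^ (-B) ≤ Fbar t / Fbar a := fun t ht =>
    (mul_le_mul_of_nonneg_left (Real.rpow_le_rpow_of_exponent_le ((one_le_div ha0).2 ht.1.le)
      (neg_le_neg (le_max_left _ _))) hC₁.le).trans (hlow a t ha ht.1)
  calc C₁ / (B - 1) * a * (1 - a / b) ≤ (∫ t in a..b, Fbar t) / Fbar a :=
        le_integral_div_of_forall_rpow_le_div (hcont.intervalIntegrable _ _) ha0 hab.le
          (le_max_right _ _) (hpos a) hC₁.le hlowB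
    _ ≤ (∫ t in a..b, Fbar t) / (Fbar a - Fbar b) :=
        div_le_div_of_nonneg_left (integral_nonneg hab.le fun t _ => (hpos t).le)
          (sub_pos.2 (hanti hab)) (sub_le_self _ (hpos b).le)
end

section
/- Let m : ℝ≥0 → ℝ≥0 be strictly increasing, γ ≥ 1, and suppose the SERPT rank r(a) = E[X − a | X > a] satisfies m(a) ≤ r(a) ≤ m(C₀ a^γ) for all a ≥ x₀ (the QIMRL condition). If y_x and z_x are the M-SERPT age cutoffs of x (defined via the monotone envelope of r) and r(y_x) = r(z_x), then z_x ≤ C₀ y_x^γ for all x with y_x ≥ x₀, hence z_x = O(x^γ) and y_x = Ω(x^{1/γ}). -/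
/-- QIMRL cutoff bound: if `m` is strictly increasing, `γ ≥ 1`, and the SERPT
rank `r` satisfies `m(a) ≤ r(a) ≤ m(C₀ a^γ)` for all `a ≥ x₀`, and if the
M-SERPT age cutoffs of `x` satisfy `y ≤ x ≤ z` and `r(y) = r(z)` with `y ≥ x₀`,
then `z ≤ C₀ y^γ`, hence `z ≤ C₀ x^γ` (so `z_x = O(x^γ)`) and
`y ≥ (x/C₀)^{1/γ}` (so `y_x = Ω(x^{1/γ})`). -/
theorem qimrl_cutoff_bounds (r m : ℝ → ℝ) (hm : StrictMonoOn m (Set.Ici 0))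
    (γ C₀ x₀ : ℝ) (hγ : 1 ≤ γ) (hC₀ : 0 < C₀) (hx₀ : 0 < x₀)
    (hbound : ∀ a, x₀ ≤ a → m a ≤ r a ∧ r a ≤ m (C₀ * a ^ γ))
    (x y z : ℝ) (hy₀ : x₀ ≤ y) (hyx : y ≤ x) (hxz : x ≤ z) (hr : r y = r z) :
    z ≤ C₀ * y ^ γ ∧ z ≤ C₀ * x ^ γ ∧ (x / C₀) ^ (1 / γ) ≤ y := by
  have hypos : 0 < y := lt_of_lt_of_le hx₀ hy₀
  have hzpos : 0 < z := lt_of_lt_of_le hypos (hyx.trans hxz)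
  have hγpos : 0 < γ := lt_of_lt_of_le one_pos hγ
  have hz₀ : x₀ ≤ z := hy₀.trans (hyx.trans hxz)
  have h1 : m z ≤ m (C₀ * y ^ γ) := by
    calc m z ≤ r z := (hbound z hz₀).1
    _ = r y := hr.symm
    _ ≤ m (C₀ * y ^ γ) := (hbound y hy₀).2
  have hcy : 0 ≤ C₀ * y ^ γ :=
    mul_nonneg hC₀.le (Real.rpow_nonneg hypos.le γ)
  have hzy : z ≤ C₀ * y ^ γ :=
    (hm.le_iff_le (Set.mem_Ici.2 hzpos.le) (Set.mem_Ici.2 hcy)).1 h1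
  have hxpow : y ^ γ ≤ x ^ γ := Real.rpow_le_rpow hypos.le hyx hγpos.le
  have hzx : z ≤ C₀ * x ^ γ := hzy.trans (by nlinarith)
  refine ⟨hzy, hzx, ?_⟩
  have hxc : x / C₀ ≤ y ^ γ := by
    rw [div_le_iff₀ hC₀]
    nlinarith [hxz.trans hzy]
  calc (x / C₀) ^ (1 / γ) ≤ (y ^ γ) ^ (1 / γ) := by
        apply Real.rpow_le_rpow (div_nonneg (hypos.trans_le hyx).le hC₀.le) hxc (by positivity)
    _ = y := by
        rw [← Real.rpow_mul hypos.le, mul_one_div, div_self hγpos.ne', Real.rpow_one]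
end

section
/- Let (y_x, z_x) be a hill-valley pair and Φ : ℝ≥0³ → ℝ differentiable in its second argument. Then ∫₀^∞ Δ₂Φ(y_x, ⟨y_x, z_x⟩, z_x) dx = ∫₀^∞ ∂₂Φ(y_x, x, z_x) dx, where Δ₂ is the difference ratio in the second argument. -/
open MeasureTheory

/-- Difference ratio operator: `ΔΦ(u,v) = (Φ(v) − Φ(u))/(v − u)` for `u ≠ v`,
and the derivative `Φ'(u)` when `u = v`. -/
noncomputable def Dratio (Φ : ℝ → ℝ) (u v : ℝ) : ℝ :=
  if u = v then deriv Φ u else (Φ v - Φ u) / (v - u)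

/-- A hill-valley partition `0 = u₀ ≤ v₀ < u₁ < v₁ < u₂ < …` of `ℝ≥0`
together with a hill-valley pair `(y, z)`: on a valley `(uᵢ, vᵢ]`, `y x = uᵢ`
and `z x = vᵢ`; on a hill, `y x = z x = x`. -/
structure HillValleyPair (u v : ℕ → ℝ) (y z : ℝ → ℝ) : Prop where
  u_zero : u 0 = 0
  uv_zero : u 0 ≤ v 0
  v_lt_u : ∀ i, v i < u (i + 1)
  u_lt_v : ∀ i, u (i + 1) < v (i + 1)
  u_tendsto : Filter.Tendsto u Filter.atTop Filter.atTop
  valley : ∀ i, ∀ x ∈ Set.Ioc (u i) (v i), y x = u i ∧ z x = v i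
  hill : ∀ i, ∀ x ∈ Set.Ioc (v i) (u (i + 1)), y x = x ∧ z x = x
  y_zero : y 0 = 0
  z_zero : z 0 = v 0

/-!
The intervals `(uᵢ, uᵢ₊₁]` partition `(0, ∞)`, so it suffices to compare the two integrals on
each of them, i.e. on each valley and each hill. On a hill `y x = z x = x`, so the two integrands
coincide. On a valley `(u, v]` the difference ratio is the constant `(Φ(u,v,v) − Φ(u,u,v))/(v − u)`,
whose integral is `Φ(u,v,v) − Φ(u,u,v) = ∫ᵤᵛ ∂₂Φ(u,x,v) dx` by the fundamental theorem of calculus.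
-/

theorem Dratio_self (F : ℝ → ℝ) (x : ℝ) : Dratio F x x = deriv F x := if_pos rfl

theorem setIntegral_Ioc_Dratio_eq_deriv {F : ℝ → ℝ} {a b : ℝ} (hab : a ≤ b)
    (hF : ∀ x ∈ Set.uIcc a b, DifferentiableAt ℝ F x) (hF' : IntegrableOn (deriv F) (Set.Ioc a b)) :
    ∫ _ in Set.Ioc a b, Dratio F a b = ∫ x in Set.Ioc a b, deriv F x := by
  rcases hab.eq_or_lt with rfl | hlt
  · simp
  have hFTC : ∫ x in a..b, deriv F x = F b - F a :=
    intervalIntegral.integral_deriv_eq_sub hF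
      ((intervalIntegrable_iff_integrableOn_Ioc_of_le hab).2 hF')
  rw [setIntegral_const, ← intervalIntegral.integral_of_le hab, hFTC,
    Real.volume_real_Ioc_of_le hab, smul_eq_mul, Dratio, if_neg hlt.ne]
  field_simp [sub_ne_zero.2 hlt.ne']

theorem setIntegral_iUnion_congr {X ι : Type*} [MeasurableSpace X] [Countable ι]
    {μ : Measure X} {s : ι → Set X} {f g : X → ℝ} (hs : ∀ i, MeasurableSet (s i))
    (hd : Pairwise (Function.onFun Disjoint s)) (hf : IntegrableOn f (⋃ i, s i) μ)
    (hg : IntegrableOn g (⋃ i, s i) μ) (hfg : ∀ i, ∫ x in s i, f x ∂μ = ∫ x in s i, g x ∂μ) :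
    ∫ x in ⋃ i, s i, f x ∂μ = ∫ x in ⋃ i, s i, g x ∂μ := by
  rw [integral_iUnion hs hd hf, integral_iUnion hs hd hg, tsum_congr hfg]

namespace HillValleyPair

variable {u v : ℕ → ℝ} {y z : ℝ → ℝ} (hvp : HillValleyPair u v y z)
include hvp

theorem u_le_v : ∀ i, u i ≤ v i
  | 0 => hvp.uv_zero
  | i + 1 => (hvp.u_lt_v i).le

theorem monotone_u : Monotone u :=
  monotone_nat_of_le_succ fun i => (hvp.u_le_v i).trans (hvp.v_lt_u i).le

theorem iUnion_Ioc_u : ⋃ i, Set.Ioc (u i) (u (i + 1)) = Set.Ioi 0 := by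
  simpa [hvp.u_zero] using iUnion_Ioc_map_succ_eq_Ioi (fun i => hvp.monotone_u (Nat.zero_le i))
    (Filter.not_bddAbove_of_tendsto_atTop hvp.u_tendsto)

variable (Φ : ℝ → ℝ → ℝ → ℝ)

theorem setIntegral_Dratio_eq_deriv_valley
    (hΦ : ∀ a c, Differentiable ℝ (fun t => Φ a t c)) (i : ℕ)
    (hint : IntegrableOn (fun x => deriv (fun t => Φ (y x) t (z x)) x) (Set.Ioc (u i) (v i))) :
    ∫ x in Set.Ioc (u i) (v i), Dratio (fun t => Φ (y x) t (z x)) (y x) (z x)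
      = ∫ x in Set.Ioc (u i) (v i), deriv (fun t => Φ (y x) t (z x)) x := by
  have hF : Set.EqOn (fun x => deriv (fun t => Φ (y x) t (z x)) x)
      (deriv fun t => Φ (u i) t (v i)) (Set.Ioc (u i) (v i)) := fun x hx => by
    simp only [hvp.valley i x hx]
  have hD : Set.EqOn (fun x => Dratio (fun t => Φ (y x) t (z x)) (y x) (z x))
      (fun _ => Dratio (fun t => Φ (u i) t (v i)) (u i) (v i)) (Set.Ioc (u i) (v i)) :=
    fun x hx => by simp only [hvp.valley i x hx]
  rw [setIntegral_congr_fun measurableSet_Ioc hF, setIntegral_congr_fun measurableSet_Ioc hD]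
  exact setIntegral_Ioc_Dratio_eq_deriv (hvp.u_le_v i) (fun x _ => (hΦ _ _).differentiableAt)
    (hint.congr_fun hF measurableSet_Ioc)

theorem setIntegral_Dratio_eq_deriv_hill (i : ℕ) :
    ∫ x in Set.Ioc (v i) (u (i + 1)), Dratio (fun t => Φ (y x) t (z x)) (y x) (z x)
      = ∫ x in Set.Ioc (v i) (u (i + 1)), deriv (fun t => Φ (y x) t (z x)) x :=
  setIntegral_congr_fun measurableSet_Ioc fun x hx => by
    simp only [hvp.hill i x hx, Dratio_self]

theorem setIntegral_Dratio_eq_deriv_Ioc_u_succ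
    (hΦ : ∀ a c, Differentiable ℝ (fun t => Φ a t c)) (i : ℕ)
    (hint1 : IntegrableOn (fun x => Dratio (fun t => Φ (y x) t (z x)) (y x) (z x))
      (Set.Ioc (u i) (u (i + 1))))
    (hint2 : IntegrableOn (fun x => deriv (fun t => Φ (y x) t (z x)) x)
      (Set.Ioc (u i) (u (i + 1)))) :
    ∫ x in Set.Ioc (u i) (u (i + 1)), Dratio (fun t => Φ (y x) t (z x)) (y x) (z x)
      = ∫ x in Set.Ioc (u i) (u (i + 1)), deriv (fun t => Φ (y x) t (z x)) x := by
  have hsplit := Set.Ioc_union_Ioc_eq_Ioc (hvp.u_le_v i) (hvp.v_lt_u i).le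
  have hdisj : Disjoint (Set.Ioc (u i) (v i)) (Set.Ioc (v i) (u (i + 1))) :=
    Set.Ioc_disjoint_Ioc_of_le le_rfl
  rw [← hsplit] at hint1 hint2 ⊢
  rw [setIntegral_union hdisj measurableSet_Ioc hint1.left_of_union hint1.right_of_union,
    setIntegral_union hdisj measurableSet_Ioc hint2.left_of_union hint2.right_of_union,
    hvp.setIntegral_Dratio_eq_deriv_valley Φ hΦ i hint2.left_of_union,
    hvp.setIntegral_Dratio_eq_deriv_hill Φ i]

end HillValleyPair

/-- For a hill-valley pair `(y, z)` and `Φ : ℝ≥0³ → ℝ` differentiable in its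
second argument,
`∫₀^∞ Δ₂Φ(y_x, ⟨y_x, z_x⟩, z_x) dx = ∫₀^∞ ∂₂Φ(y_x, x, z_x) dx`. -/
theorem hill_valley_Dratio_integral (u v : ℕ → ℝ) (y z : ℝ → ℝ)
    (hvp : HillValleyPair u v y z) (Φ : ℝ → ℝ → ℝ → ℝ)
    (hΦ2 : ∀ a c, Differentiable ℝ (fun t => Φ a t c))
    (hint1 : IntegrableOn
      (fun x => Dratio (fun t => Φ (y x) t (z x)) (y x) (z x)) (Set.Ioi 0))
    (hint2 : IntegrableOn
      (fun x => deriv (fun t => Φ (y x) t (z x)) x) (Set.Ioi 0)) :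
    ∫ x in Set.Ioi (0:ℝ), Dratio (fun t => Φ (y x) t (z x)) (y x) (z x)
      = ∫ x in Set.Ioi (0:ℝ), deriv (fun t => Φ (y x) t (z x)) x := by
  rw [← hvp.iUnion_Ioc_u] at hint1 hint2 ⊢
  exact setIntegral_iUnion_congr (fun _ => measurableSet_Ioc)
    hvp.monotone_u.pairwise_disjoint_on_Ioc_succ hint1 hint2 fun i =>
      have hsub := Set.subset_iUnion (fun i => Set.Ioc (u i) (u (i + 1))) i
      hvp.setIntegral_Dratio_eq_deriv_Ioc_u_succ Φ hΦ2 i (hint1.mono_set hsub)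
        (hint2.mono_set hsub)
end
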